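/- arXiv:2601.08564 — 2 statements merged into one kernel-verified Lean document; each statement's English description precedes it below -/
import Mathlib

section
/- Let Y be a finite nonempty type, let π_ref be a probability mass function on Y, let β > 0, and let D : Y → ℝ satisfy 0 ≤ D(y) ≤ 1 for all y. For each C ≥ 0 let π*_C be the Gibbs policy with reward r_C(y) = C·(1 − D(y)). Let m = min{ D(y) : y ∈ Y, π_ref(y) > 0 } and let S = { y ∈ Y : π_ref(y) > 0 and D(y) = m }. Then the total mass Σ_{y ∈ S} π*_C(y) tends to 1 as C → ∞. -/
open scoped Classical
open Filter

/-!
Write `r = 1 - D` and `M = 1 - m` for the largest reward on the support of `πref`. Multiplying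
numerator and denominator of the Gibbs mass of `S` by `exp (-t M)` (with `t = C / β`) turns it into
`πref(S) / ∑ y, πref y * exp (t (r y - M))`. Every exponent `t (r y - M)` on the support is `0` on
`S` and tends to `-∞` off `S`, so the denominator tends to `πref(S) > 0` and the mass tends to `1`.
-/

namespace Real

variable {ι : Type*} [Fintype ι]

noncomputable def gibbs (w r : ι → ℝ) (t : ℝ) (i : ι) : ℝ :=
  w i * exp (t * r i) / ∑ j, w j * exp (t * r j)

theorem tendsto_mul_exp_mul_atTop (w s : ℝ) (hs : w ≠ 0 → s ≤ 0) :
    Tendsto (fun t => w * exp (t * s)) atTop (nhds (if s = 0 then w else 0)) := by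
  rcases eq_or_ne w 0 with rfl | hw
  · simp
  rcases (hs hw).lt_or_eq with hneg | rfl
  · have hexp : Tendsto (fun t => exp (t * s)) atTop (nhds 0) :=
      tendsto_exp_atBot.comp (tendsto_id.atTop_mul_const_of_neg hneg)
    simpa [hneg.ne] using hexp.const_mul w
  · simp

theorem tendsto_sum_mul_exp_mul_atTop (w s : ι → ℝ) (hs : ∀ i, w i ≠ 0 → s i ≤ 0) :
    Tendsto (fun t => ∑ i, w i * exp (t * s i)) atTop
      (nhds (∑ i ∈ Finset.univ.filter (fun i => s i = 0), w i)) := by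
  rw [Finset.sum_filter]
  exact tendsto_finsetSum _ fun i _ => tendsto_mul_exp_mul_atTop (w i) (s i) (hs i)

theorem tendsto_sum_gibbs_argmax (w r : ι → ℝ) (hw : ∀ i, 0 ≤ w i) (M : ℝ)
    (hM_mem : ∃ i, 0 < w i ∧ r i = M) (hM_max : ∀ i, 0 < w i → r i ≤ M) :
    Tendsto (fun t => ∑ i ∈ Finset.univ.filter (fun i => 0 < w i ∧ r i = M), gibbs w r t i)
      atTop (nhds 1) := by
  set S := Finset.univ.filter (fun i => 0 < w i ∧ r i = M)
  set A := ∑ i ∈ S, w i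
  obtain ⟨i₀, hi₀, hri₀⟩ := hM_mem
  have hA : 0 < A :=
    Finset.sum_pos' (fun i _ => hw i) ⟨i₀, by simp [S, hi₀, hri₀], hi₀⟩
  have hnum (t : ℝ) : ∑ i ∈ S, w i * exp (t * r i) = A * exp (t * M) := by
    rw [Finset.sum_mul]
    refine Finset.sum_congr rfl fun i hi => ?_
    rw [(Finset.mem_filter.mp hi).2.2]
  have hden (t : ℝ) : ∑ i, w i * exp (t * r i) =
      (∑ i, w i * exp (t * (r i - M))) * exp (t * M) := by
    rw [Finset.sum_mul]
    refine Finset.sum_congr rfl fun i _ => ?_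
    rw [mul_assoc, ← exp_add]
    ring_nf
  have hmass (t : ℝ) : ∑ i ∈ S, gibbs w r t i = A / ∑ i, w i * exp (t * (r i - M)) := by
    simp only [gibbs, ← Finset.sum_div, hnum, hden, mul_div_mul_right _ _ (exp_pos _).ne']
  -- Off the support the weights vanish, so the limit of the shifted partition function is `A`.
  have hlim : ∑ i ∈ Finset.univ.filter (fun i => r i - M = 0), w i = A := by
    rw [← Finset.sum_filter_of_ne (p := fun i => 0 < w i) fun i _ hi => (hw i).lt_of_ne' hi,
      Finset.filter_filter]
    simp only [sub_eq_zero, and_comm, S, A]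
  have hZ := tendsto_sum_mul_exp_mul_atTop w (fun i => r i - M)
    fun i hi => sub_nonpos.mpr (hM_max i ((hw i).lt_of_ne' hi))
  rw [hlim] at hZ
  have hratio := tendsto_const_nhds (x := A) |>.div hZ hA.ne'
  rw [div_self hA.ne'] at hratio
  exact hratio.congr fun t => (hmass t).symm

end Real

theorem gibbs_evasion_policy_concentrates_on_min_detector_score_general
    {Y : Type*} [Fintype Y]
    (πref : Y → ℝ) (href_nonneg : ∀ y, 0 ≤ πref y)
    (β : ℝ) (hβ : 0 < β)
    (D : Y → ℝ)
    (πstarC : ℝ → Y → ℝ)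
    (hπstarC : ∀ C y, πstarC C y =
      πref y * Real.exp (C * (1 - D y) / β) /
        (∑ y', πref y' * Real.exp (C * (1 - D y') / β)))
    (m : ℝ) (hm_mem : ∃ y, 0 < πref y ∧ D y = m)
    (hm_min : ∀ y, 0 < πref y → m ≤ D y) :
    Tendsto (fun C : ℝ =>
        ∑ y ∈ Finset.univ.filter (fun y => 0 < πref y ∧ D y = m), πstarC C y)
      atTop (nhds 1) := by
  have hπstar (C : ℝ) : πstarC C = Real.gibbs πref (fun y => 1 - D y) (C / β) := by
    funext y
    simp only [hπstarC, Real.gibbs, mul_div_right_comm C]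
  have hconc := Real.tendsto_sum_gibbs_argmax πref (fun y => 1 - D y) href_nonneg (1 - m)
    (by simpa only [sub_right_inj] using hm_mem)
    (fun y hy => sub_le_sub_left (hm_min y hy) 1)
  simp only [sub_right_inj] at hconc
  exact (hconc.comp (tendsto_id.atTop_div_const hβ)).congr fun C => by simp [hπstar]

/-- **Optimality of Evasion (concentration on the minimal-score set).**
For a pmf `πref` on a finite nonempty `Y`, `β > 0`, a detector `D : Y → [0,1]`,
and the Gibbs policy `πstarC C` with reward `r_C y = C · (1 − D y)`, let `m` be the
minimum of `D` over the support of `πref` and `S = {y | πref y > 0 ∧ D y = m}`.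
Then `∑_{y ∈ S} πstarC C y → 1` as `C → ∞`. -/
theorem gibbs_evasion_policy_concentrates_on_min_detector_score
    {Y : Type*} [Fintype Y] [Nonempty Y]
    (πref : Y → ℝ) (href_nonneg : ∀ y, 0 ≤ πref y) (href_sum : ∑ y, πref y = 1)
    (β : ℝ) (hβ : 0 < β)
    (D : Y → ℝ) (hD : ∀ y, 0 ≤ D y ∧ D y ≤ 1)
    (πstarC : ℝ → Y → ℝ)
    (hπstarC : ∀ C y, πstarC C y =
      πref y * Real.exp (C * (1 - D y) / β) /
        (∑ y', πref y' * Real.exp (C * (1 - D y') / β)))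
    (m : ℝ) (hm_mem : ∃ y, 0 < πref y ∧ D y = m)
    (hm_min : ∀ y, 0 < πref y → m ≤ D y) :
    Tendsto (fun C : ℝ =>
        ∑ y ∈ Finset.univ.filter (fun y => 0 < πref y ∧ D y = m), πstarC C y)
      atTop (nhds 1) :=
  gibbs_evasion_policy_concentrates_on_min_detector_score_general πref href_nonneg β hβ D πstarC
    hπstarC m hm_mem hm_min
end

section
/- Let Y be a finite nonempty type, let π_ref be a probability mass function on Y, let β > 0, and let D : Y → ℝ satisfy 0 ≤ D(y) ≤ 1 for all y. For each C ≥ 0 let π*_C be the Gibbs policy with reward r_C(y) = C·(1 − D(y)), and let m = min{ D(y) : y ∈ Y, π_ref(y) > 0 }. Then the expected detector score Σ_{y ∈ Y} π*_C(y)·D(y) tends to m as C → ∞. -/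
open Filter

/-- **Optimality of Evasion (expected detector score).**
For a pmf `πref` on a finite nonempty `Y`, `β > 0`, a detector `D : Y → [0,1]`,
and the Gibbs policy `πstarC C` with reward `r_C y = C · (1 − D y)`, letting `m` be
the minimum of `D` over the support of `πref`, the expected detector score
`∑ y, πstarC C y · D y` tends to `m` as `C → ∞`. -/
theorem gibbs_evasion_policy_expected_detector_score_tendsto_min
    {Y : Type*} [Fintype Y] [Nonempty Y]
    (πref : Y → ℝ) (href_nonneg : ∀ y, 0 ≤ πref y) (href_sum : ∑ y, πref y = 1)
    (β : ℝ) (hβ : 0 < β)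
    (D : Y → ℝ) (hD : ∀ y, 0 ≤ D y ∧ D y ≤ 1)
    (πstarC : ℝ → Y → ℝ)
    (hπstarC : ∀ C y, πstarC C y =
      πref y * Real.exp (C * (1 - D y) / β) /
        (∑ y', πref y' * Real.exp (C * (1 - D y') / β)))
    (m : ℝ) (hm_mem : ∃ y, 0 < πref y ∧ D y = m)
    (hm_min : ∀ y, 0 < πref y → m ≤ D y) :
    Tendsto (fun C : ℝ => ∑ y, πstarC C y * D y) atTop (nhds m) := by
  classical
  set f : ℝ → Y → ℝ := fun C y => πref y * Real.exp (C * (m - D y) / β) with hf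
  set g : Y → ℝ := fun y => if D y = m then πref y else 0 with hg
  -- rewrite the expected score as a quotient of rescaled sums
  have key : ∀ C : ℝ, ∑ y, πstarC C y * D y
      = (∑ y, f C y * D y) / (∑ y, f C y) := by
    intro C
    have he : Real.exp (C * (m - 1) / β) ≠ 0 := Real.exp_ne_zero _
    have hfy : ∀ y, f C y = (πref y * Real.exp (C * (1 - D y) / β)) *
        Real.exp (C * (m - 1) / β) := by
      intro y
      simp only [hf, mul_assoc, ← Real.exp_add]
      ring_nf
    have h1 : (∑ y, f C y) = (∑ y, πref y * Real.exp (C * (1 - D y) / β)) *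
        Real.exp (C * (m - 1) / β) := by
      rw [Finset.sum_mul]; exact Finset.sum_congr rfl fun y _ => hfy y
    have h2 : (∑ y, f C y * D y) = (∑ y, πref y * Real.exp (C * (1 - D y) / β) * D y) *
        Real.exp (C * (m - 1) / β) := by
      rw [Finset.sum_mul]
      exact Finset.sum_congr rfl fun y _ => by rw [hfy y]; ring
    rw [h1, h2, mul_div_mul_right _ _ he]
    rw [Finset.sum_div]
    exact Finset.sum_congr rfl fun y _ => by rw [hπstarC]; ring
  -- pointwise limits
  have hptw : ∀ y, Tendsto (fun C : ℝ => f C y) atTop (nhds (g y)) := by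
    intro y
    by_cases hDy : D y = m
    · simp only [hf, hg, hDy, sub_self, mul_zero, zero_div, Real.exp_zero, mul_one, if_pos rfl]
      exact tendsto_const_nhds
    · simp only [hg, if_neg hDy]
      rcases eq_or_lt_of_le (href_nonneg y) with h0 | h0
      · simp only [hf, ← h0, zero_mul]
        exact tendsto_const_nhds
      · have hlt : m < D y := lt_of_le_of_ne (hm_min y h0) fun h => hDy h.symm
        have hneg : (m - D y) / β < 0 := div_neg_of_neg_of_pos (by linarith) hβ
        have hexp : Tendsto (fun C : ℝ => Real.exp (C * (m - D y) / β)) atTop (nhds 0) := by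
          have h3 : Tendsto (fun C : ℝ => C * ((m - D y) / β)) atTop atBot :=
            Tendsto.atTop_mul_const_of_neg hneg tendsto_id
          have h4 : Tendsto (fun C : ℝ => Real.exp (C * ((m - D y) / β))) atTop (nhds 0) :=
            Real.tendsto_exp_atBot.comp h3
          simpa [mul_div_assoc] using h4
        simpa using (hexp.const_mul (πref y))
  have hden : Tendsto (fun C : ℝ => ∑ y, f C y) atTop (nhds (∑ y, g y)) :=
    tendsto_finset_sum _ fun y _ => hptw y
  have hnum : Tendsto (fun C : ℝ => ∑ y, f C y * D y) atTop (nhds (∑ y, g y * D y)) :=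
    tendsto_finset_sum _ fun y _ => (hptw y).mul tendsto_const_nhds
  obtain ⟨y₀, hy₀pos, hy₀m⟩ := hm_mem
  have hSpos : 0 < ∑ y, g y := by
    have h1 : g y₀ ≤ ∑ y, g y := by
      apply Finset.single_le_sum (fun y _ => ?_) (Finset.mem_univ y₀)
      simp only [hg]; split <;> [exact href_nonneg y; exact le_refl 0]
    have : 0 < g y₀ := by simp [hg, hy₀m, hy₀pos]
    linarith
  have hnum_eq : (∑ y, g y * D y) = m * ∑ y, g y := by
    rw [Finset.mul_sum]
    refine Finset.sum_congr rfl fun y _ => ?_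
    simp only [hg]
    split
    · rename_i h; rw [h]; ring
    · ring
  have := (hnum.div hden hSpos.ne')
  rw [hnum_eq, mul_div_assoc, div_self hSpos.ne', mul_one] at this
  simpa only [key, Pi.div_def] using this
end
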